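/- Let Y be a mean zero random variable with variance σ² ∈ (0,∞), and let Y* be defined on the same probability space and have the Y-zero biased distribution. Suppose Y* − Y ≤ c almost surely for some constant c > 0, and let θ > 0 be such that E[exp(sY)] is finite for all s ∈ [0, θ]. Then E[exp(θY)] ≤ exp((σ²/c²)(e^{cθ}(cθ − 1) + 1)). -/

import Mathlib

open MeasureTheory ProbabilityTheory Real

/-- `Ystar` has the `Y`-zero biased distribution with respect to variance `σ2`:
`E[Y f(Y)] = σ2 * E[f'(Ystar)]` for every (absolutely continuous) differentiable
function `f` with derivative `f'` for which both expectations exist. -/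
def ZeroBiased {Ω : Type*} [MeasurableSpace Ω] (μ : Measure Ω)
    (Y Ystar : Ω → ℝ) (σ2 : ℝ) : Prop :=
  ∀ f f' : ℝ → ℝ, (∀ x, HasDerivAt f (f' x) x) →
    Integrable (fun ω => Y ω * f (Y ω)) μ →
    Integrable (fun ω => f' (Ystar ω)) μ →
    ∫ ω, Y ω * f (Y ω) ∂μ = σ2 * ∫ ω, f' (Ystar ω) ∂μ

/-!
Write `K = log E[exp(sY)]` for the cumulant generating function. The zero-bias identity applied to
`f(x) = exp(s x)` gives `E[Y exp(sY)] = σ² s E[exp(sY*)]`, and `Y* ≤ Y + c` bounds the right-hand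
side by `σ² s e^{sc} E[exp(sY)]`; hence `K'(s) ≤ σ² s e^{cs}` on `(0, θ)`. Integrating from
`K(0) = 0` gives `K(θ) ≤ ∫₀^θ σ² s e^{cs} ds = (σ²/c²)(e^{cθ}(cθ - 1) + 1)`.
-/

lemma sub_le_sub_of_hasDerivAt_le {f g f' g' : ℝ → ℝ} {a b : ℝ} (hab : a ≤ b)
    (hf : ContinuousOn f (Set.Icc a b)) (hg : ContinuousOn g (Set.Icc a b))
    (hf' : ∀ x ∈ Set.Ioo a b, HasDerivAt f (f' x) x)
    (hg' : ∀ x ∈ Set.Ioo a b, HasDerivAt g (g' x) x)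
    (hle : ∀ x ∈ Set.Ioo a b, f' x ≤ g' x) :
    f b - f a ≤ g b - g a := by
  rcases hab.eq_or_lt with rfl | hab
  · simp
  obtain ⟨ξ, hξ, hslope⟩ := exists_hasDerivAt_eq_slope (f - g) (f' - g') hab (hf.sub hg)
    fun x hx => (hf' x hx).sub (hg' x hx)
  have h : (f' - g') ξ ≤ 0 := sub_nonpos.2 (hle ξ hξ)
  rw [hslope, div_le_iff₀ (sub_pos.2 hab), zero_mul] at h
  simp only [Pi.sub_apply] at h
  linarith

lemma exp_mul_le_exp_mul_add_exp_mul {a b t : ℝ} (hat : a ≤ t) (htb : t ≤ b) (x : ℝ) :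
    exp (t * x) ≤ exp (a * x) + exp (b * x) := by
  rcases le_total 0 x with hx | hx
  · linarith [exp_le_exp.2 (mul_le_mul_of_nonneg_right htb hx), exp_pos (a * x)]
  · linarith [exp_le_exp.2 (mul_le_mul_of_nonpos_right hat hx), exp_pos (b * x)]

noncomputable def bennettExponent (σ2 c t : ℝ) : ℝ :=
  σ2 / c ^ 2 * (exp (c * t) * (c * t - 1) + 1)

lemma bennettExponent_zero (σ2 c : ℝ) : bennettExponent σ2 c 0 = 0 := by
  simp [bennettExponent]

lemma continuous_bennettExponent (σ2 c : ℝ) : Continuous (bennettExponent σ2 c) := by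
  unfold bennettExponent
  fun_prop

lemma hasDerivAt_bennettExponent (σ2 : ℝ) {c : ℝ} (hc : c ≠ 0) (t : ℝ) :
    HasDerivAt (bennettExponent σ2 c) (σ2 * t * exp (c * t)) t := by
  have hct : HasDerivAt (fun t => c * t) c t := by
    simpa using (hasDerivAt_id t).const_mul c
  refine (((hct.exp.mul (hct.sub_const 1)).add_const 1).const_mul (σ2 / c ^ 2)).congr_deriv ?_
  field_simp
  ring

namespace ProbabilityTheory

variable {Ω : Type*} [MeasurableSpace Ω] {μ : Measure Ω} {X : Ω → ℝ} {a b t : ℝ}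

lemma hasDerivAt_cgf (h : t ∈ interior (integrableExpSet X μ)) :
    HasDerivAt (cgf X μ) (μ[fun ω ↦ X ω * exp (t * X ω)] / mgf X μ t) t :=
  deriv_cgf h ▸ (analyticAt_cgf h).differentiableAt.hasDerivAt

lemma continuousOn_mgf_Icc (ha : a ∈ integrableExpSet X μ) (hb : b ∈ integrableExpSet X μ) :
    ContinuousOn (mgf X μ) (Set.Icc a b) :=
  continuousOn_of_dominated
    (fun t ht => (integrable_exp_mul_of_le_of_le ha hb ht.1 ht.2).aestronglyMeasurable)
    (fun t ht => ae_of_all _ fun ω => by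
      rw [norm_of_nonneg (exp_nonneg _)]
      exact exp_mul_le_exp_mul_add_exp_mul ht.1 ht.2 (X ω))
    (ha.add hb) (ae_of_all _ fun ω => by fun_prop)

lemma continuousOn_cgf_Icc [IsProbabilityMeasure μ] (ha : a ∈ integrableExpSet X μ)
    (hb : b ∈ integrableExpSet X μ) : ContinuousOn (cgf X μ) (Set.Icc a b) :=
  (continuousOn_mgf_Icc ha hb).log fun _ ht =>
    (mgf_pos (integrable_exp_mul_of_le_of_le ha hb ht.1 ht.2)).ne'

end ProbabilityTheory

section ZeroBias

variable {Ω : Type*} [MeasurableSpace Ω] {μ : Measure Ω} {Y Ystar : Ω → ℝ} {σ2 c s : ℝ}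

lemma ae_exp_mul_le_exp_mul_mul_exp_mul (hs : 0 ≤ s) (hbdd : ∀ᵐ ω ∂μ, Ystar ω - Y ω ≤ c) :
    ∀ᵐ ω ∂μ, exp (s * Ystar ω) ≤ exp (s * c) * exp (s * Y ω) := by
  filter_upwards [hbdd] with ω hω
  rw [← exp_add, exp_le_exp]
  nlinarith

lemma integrable_exp_mul_of_ae_sub_le (hs : 0 ≤ s) (hbdd : ∀ᵐ ω ∂μ, Ystar ω - Y ω ≤ c)
    (hYstar : AEMeasurable Ystar μ) (hint : Integrable (fun ω => exp (s * Y ω)) μ) :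
    Integrable (fun ω => exp (s * Ystar ω)) μ := by
  refine (hint.const_mul (exp (s * c))).mono'
    (hYstar.const_mul s).exp.aestronglyMeasurable ?_
  filter_upwards [ae_exp_mul_le_exp_mul_mul_exp_mul hs hbdd] with ω hω
  rwa [norm_of_nonneg (exp_nonneg _)]

lemma mgf_le_exp_mul_mgf_of_ae_sub_le (hs : 0 ≤ s) (hbdd : ∀ᵐ ω ∂μ, Ystar ω - Y ω ≤ c)
    (hYstar : AEMeasurable Ystar μ) (hint : Integrable (fun ω => exp (s * Y ω)) μ) :
    mgf Ystar μ s ≤ exp (s * c) * mgf Y μ s := by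
  rw [mgf, mgf, ← integral_const_mul]
  exact integral_mono_ae (integrable_exp_mul_of_ae_sub_le hs hbdd hYstar hint)
    (hint.const_mul _) (ae_exp_mul_le_exp_mul_mul_exp_mul hs hbdd)

lemma ZeroBiased.integral_mul_exp_mul (hzb : ZeroBiased μ Y Ystar σ2)
    (hY : Integrable (fun ω => Y ω * exp (s * Y ω)) μ)
    (hYstar : Integrable (fun ω => exp (s * Ystar ω)) μ) :
    ∫ ω, Y ω * exp (s * Y ω) ∂μ = σ2 * s * mgf Ystar μ s := by
  have hf : ∀ x, HasDerivAt (fun x => exp (s * x)) (exp (s * x) * s) x := fun x => by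
    simpa using ((hasDerivAt_id x).const_mul s).exp
  rw [hzb _ _ hf hY (hYstar.mul_const s), integral_mul_const, mgf]
  ring

lemma ZeroBiased.integral_mul_exp_mul_le (hzb : ZeroBiased μ Y Ystar σ2) (hσ2 : 0 ≤ σ2)
    (hs : 0 ≤ s) (hbdd : ∀ᵐ ω ∂μ, Ystar ω - Y ω ≤ c) (hYstar : AEMeasurable Ystar μ)
    (hint : Integrable (fun ω => exp (s * Y ω)) μ)
    (hint' : Integrable (fun ω => Y ω * exp (s * Y ω)) μ) :
    ∫ ω, Y ω * exp (s * Y ω) ∂μ ≤ σ2 * s * exp (s * c) * mgf Y μ s := by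
  rw [hzb.integral_mul_exp_mul hint' (integrable_exp_mul_of_ae_sub_le hs hbdd hYstar hint),
    mul_assoc _ (exp _)]
  exact mul_le_mul_of_nonneg_left (mgf_le_exp_mul_mgf_of_ae_sub_le hs hbdd hYstar hint)
    (mul_nonneg hσ2 hs)

lemma ZeroBiased.cgf_le_bennettExponent [IsProbabilityMeasure μ]
    (hzb : ZeroBiased μ Y Ystar σ2) (hσ2 : 0 ≤ σ2) (hc : c ≠ 0)
    (hbdd : ∀ᵐ ω ∂μ, Ystar ω - Y ω ≤ c) (hYstar : AEMeasurable Ystar μ) {θ : ℝ} (hθ : 0 ≤ θ)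
    (hmgf : Set.Icc 0 θ ⊆ integrableExpSet Y μ) :
    cgf Y μ θ ≤ bennettExponent σ2 c θ := by
  have hinterior : Set.Ioo 0 θ ⊆ interior (integrableExpSet Y μ) :=
    interior_Icc (a := (0 : ℝ)) ▸ interior_mono hmgf
  have hderiv_le (s : ℝ) (hs : s ∈ Set.Ioo 0 θ) :
      μ[fun ω ↦ Y ω * exp (s * Y ω)] / mgf Y μ s ≤ σ2 * s * exp (c * s) := by
    have hint := hmgf (Set.Ioo_subset_Icc_self hs)
    rw [div_le_iff₀ (mgf_pos hint), mul_comm c]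
    simpa using hzb.integral_mul_exp_mul_le hσ2 hs.1.le hbdd hYstar hint
      (by simpa using integrable_pow_mul_exp_of_mem_interior_integrableExpSet (hinterior hs) 1)
  have := sub_le_sub_of_hasDerivAt_le hθ
    (continuousOn_cgf_Icc (hmgf (Set.left_mem_Icc.2 hθ)) (hmgf (Set.right_mem_Icc.2 hθ)))
    (continuous_bennettExponent σ2 c).continuousOn (fun s hs => hasDerivAt_cgf (hinterior hs))
    (fun s _ => hasDerivAt_bennettExponent σ2 hc s) hderiv_le
  simpa [bennettExponent_zero] using this

end ZeroBias

theorem zero_bias_mgf_bound_bennett_general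
    {Ω : Type*} [MeasurableSpace Ω] (μ : Measure Ω) [IsProbabilityMeasure μ]
    (Y Ystar : Ω → ℝ) (hYstar : Measurable Ystar)
    (σ2 : ℝ) (hσ2 : 0 < σ2)
    (hzb : ZeroBiased μ Y Ystar σ2)
    (c : ℝ) (hc : 0 < c)
    (hbdd : ∀ᵐ ω ∂μ, Ystar ω - Y ω ≤ c)
    (θ : ℝ) (hθ : 0 < θ)
    (hmgf : ∀ s ∈ Set.Icc (0 : ℝ) θ, Integrable (fun ω => exp (s * Y ω)) μ) :
    ∫ ω, exp (θ * Y ω) ∂μ ≤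
      exp (σ2 / c ^ 2 * (Real.exp (c * θ) * (c * θ - 1) + 1)) := by
  have hcgf := hzb.cgf_le_bennettExponent hσ2.le hc.ne' hbdd hYstar.aemeasurable hθ.le hmgf
  rw [← mgf, ← exp_cgf (hmgf θ ⟨hθ.le, le_rfl⟩)]
  exact exp_le_exp.2 hcgf

theorem zero_bias_mgf_bound_bennett
    {Ω : Type*} [MeasurableSpace Ω] (μ : Measure Ω) [IsProbabilityMeasure μ]
    (Y Ystar : Ω → ℝ) (hY : Measurable Y) (hYstar : Measurable Ystar)
    (σ2 : ℝ) (hσ2 : 0 < σ2)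
    (hmean : ∫ ω, Y ω ∂μ = 0) (hL2 : MemLp Y 2 μ) (hvar : variance Y μ = σ2)
    (hzb : ZeroBiased μ Y Ystar σ2)
    (c : ℝ) (hc : 0 < c)
    (hbdd : ∀ᵐ ω ∂μ, Ystar ω - Y ω ≤ c)
    (θ : ℝ) (hθ : 0 < θ)
    (hmgf : ∀ s ∈ Set.Icc (0 : ℝ) θ, Integrable (fun ω => exp (s * Y ω)) μ) :
    ∫ ω, exp (θ * Y ω) ∂μ ≤
      exp (σ2 / c ^ 2 * (Real.exp (c * θ) * (c * θ - 1) + 1)) :=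
  zero_bias_mgf_bound_bennett_general μ Y Ystar hYstar σ2 hσ2 hzb c hc hbdd θ hθ hmgf
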